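/- Let P be a bipartite ν-partition of G whose number of removed edges equals ν − 1 (so the partition graph is a tree), and assume all eigenvalues of H(G) are simple. Then there is at most one vector γ of strictly negative parameters indexed by the removed edges such that (P,γ) is an equipartition. -/

import Mathlib

open Matrix

open Classical in
/-- The discrete Schrödinger operator (Hamiltonian) `H(G) = -A(G) + Q` on the graph `G`
with potential `q`, given entrywise: `q a` on the diagonal, `-1` on adjacent pairs of
vertices, and `0` otherwise. -/
noncomputable def Ham {V : ℕ} (G : SimpleGraph (Fin V)) (q : Fin V → ℝ) :
    Matrix (Fin V) (Fin V) ℝ :=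
  Matrix.of fun a b => if a = b then q a else if G.Adj a b then -1 else 0

/-- The perturbation matrix `B(i,j;α)`: its only (potentially) nonzero entries are
`B i i = -α`, `B j j = -1/α` and `B i j = B j i = 1`. -/
noncomputable def Bmat {V : ℕ} (i j : Fin V) (α : ℝ) : Matrix (Fin V) (Fin V) ℝ :=
  Matrix.of fun a b =>
    (if a = i ∧ b = i then -α else 0) + (if a = j ∧ b = j then -1/α else 0) +
      (if (a = i ∧ b = j) ∨ (a = j ∧ b = i) then 1 else 0)

lemma Ham_isHermitian {V : ℕ} (G : SimpleGraph (Fin V)) (q : Fin V → ℝ) :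
    (Ham G q).IsHermitian := by
  classical
  unfold Matrix.IsHermitian
  ext a b
  simp only [Matrix.conjTranspose_apply, Ham, Matrix.of_apply, star_trivial]
  by_cases h : a = b
  · subst h; simp
  · simp [h, Ne.symm h, SimpleGraph.adj_comm]

lemma Bmat_isHermitian {V : ℕ} (i j : Fin V) (α : ℝ) : (Bmat i j α).IsHermitian := by
  unfold Matrix.IsHermitian
  ext a b
  simp only [Matrix.conjTranspose_apply, Bmat, Matrix.of_apply, star_trivial]
  by_cases hai : a = i <;> by_cases haj : a = j <;> by_cases hbi : b = i <;>
    by_cases hbj : b = j <;> simp [hai, haj, hbi, hbj]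

/-- The eigenvalues of a Hermitian matrix, sorted in nondecreasing order and
counted with multiplicity; `sortedEigs hM k` is the `(k+1)`-st smallest eigenvalue. -/
noncomputable def sortedEigs {n : ℕ} {M : Matrix (Fin n) (Fin n) ℝ} (hM : M.IsHermitian) :
    Fin n → ℝ :=
  hM.eigenvalues ∘ Tuple.sort hM.eigenvalues

/-- The lowest eigenvalue `λ₁(P_k;α)` of the block of the (Hermitian) matrix `M`
corresponding to the connected component `c` of the graph `H`, i.e. of the principal
submatrix of `M` indexed by the vertices of `c`. -/
noncomputable def lam1Block {V : ℕ} {M : Matrix (Fin V) (Fin V) ℝ} (hM : M.IsHermitian)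
    (H : SimpleGraph (Fin V)) (c : H.ConnectedComponent) : ℝ :=
  letI : Fintype {v : Fin V // H.connectedComponentMk v = c} := Fintype.ofFinite _
  letI : DecidableEq {v : Fin V // H.connectedComponentMk v = c} := Classical.decEq _
  ⨅ w : {v : Fin V // H.connectedComponentMk v = c},
    (hM.submatrix (Subtype.val : {v : Fin V // H.connectedComponentMk v = c} → Fin V)).eigenvalues w

/-!
Every block of `H(P;γ)` is a Schrödinger operator on a connected graph, so its ground state can
be chosen positive (the usual `|x|` argument), and at an equipartition with common value `Λ` every
combination `ψ = Σₖ dₖ φₖ` of these ground states is a `Λ`-eigenvector of `H(P;γ)`. There are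
`ν` coefficients and only `ν - 1` removed edges, so the `dₖ` can be chosen, not all zero, with
`ψ j = γₑ ψ i` on every removed edge `e = (i, j)`. Then `B(e;γₑ) ψ = 0`, so `ψ` is a
`Λ`-eigenvector of `H(G)`; since `G` is connected and `γₑ ≠ 0`, every `dₖ ≠ 0`. For two such
equipartitions `γ, γ'` with negative parameters, the sign of `ψ v * ψ' v` is constant on blocks and
is multiplied by `γₑ γ'ₑ > 0` across removed edges, so it is constant and `ψ ⬝ ψ' ≠ 0`. Hence the
two eigenvalues agree, simplicity of the spectrum gives `ψ' = t ψ`, and the edge relations give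
`γ = γ'`.
-/

theorem SimpleGraph.Preconnected.forall_of_adj_imp {V : Type*} {G : SimpleGraph V}
    (hG : G.Preconnected) {p : V → Prop} (h : ∀ a b, G.Adj a b → p a → p b) {a : V} (ha : p a)
    (b : V) : p b := by
  induction (G.reachable_iff_reflTransGen a b).mp (hG a b) with
  | refl => exact ha
  | tail _ hbc ih => exact h _ _ hbc ih

theorem SimpleGraph.Preconnected.forall_of_deleteEdges_adj_imp {V : Type*} [DecidableEq V]
    {G : SimpleGraph V} (hG : G.Preconnected) {S : Finset (V × V)} {p : V → Prop}
    (hP : ∀ a b, (G.deleteEdges ↑(S.image fun e => s(e.1, e.2))).Adj a b → p a → p b)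
    (hS : ∀ e ∈ S, p e.1 ↔ p e.2) {a : V} (ha : p a) (b : V) : p b := by
  refine hG.forall_of_adj_imp (fun a b hab => ?_) ha b
  by_cases h : s(a, b) ∈ S.image fun e => s(e.1, e.2)
  · obtain ⟨e, he, heab⟩ := Finset.mem_image.mp h
    rcases Sym2.eq_iff.mp heab with ⟨rfl, rfl⟩ | ⟨rfl, rfl⟩
    exacts [(hS e he).mp, (hS e he).mpr]
  · exact hP a b ((G.deleteEdges_adj ..).mpr ⟨hab, Finset.mem_coe.not.mpr h⟩)

lemma exists_ne_zero_forall_mul_eq {ι κ : Type*} [Finite κ] (S : Finset ι)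
    (hS : S.card < Nat.card κ) (x y : ι → κ) (u w : ι → ℝ) :
    ∃ d : κ → ℝ, d ≠ 0 ∧ ∀ p ∈ S, u p * d (x p) = w p * d (y p) := by
  have := Fintype.ofFinite κ
  let T : (κ → ℝ) →ₗ[ℝ] (S → ℝ) :=
    LinearMap.pi fun p => u p • LinearMap.proj (x p) - w p • LinearMap.proj (y p)
  obtain ⟨d, hd, hd0⟩ := Submodule.exists_mem_ne_zero_of_ne_bot
    (T.ker_ne_bot_of_finrank_lt (by simpa [Nat.card_eq_fintype_card] using hS))
  refine ⟨d, hd0, fun p hp => sub_eq_zero.mp ?_⟩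
  simpa [T] using congrFun (LinearMap.mem_ker.mp hd) ⟨p, hp⟩

namespace Matrix

variable {n : Type*} [Fintype n] {A : Matrix n n ℝ}

lemma dotProduct_sub_smul_one_mulVec [DecidableEq n] (μ : ℝ) (x : n → ℝ) :
    x ⬝ᵥ ((A - μ • (1 : Matrix n n ℝ)) *ᵥ x) = x ⬝ᵥ (A *ᵥ x) - μ * (x ⬝ᵥ x) := by
  simp [sub_mulVec, dotProduct_sub, smul_mulVec]

lemma abs_dotProduct_mulVec_abs_le (hoff : ∀ a b, a ≠ b → A a b ≤ 0) (x : n → ℝ) :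
    (fun v => |x v|) ⬝ᵥ (A *ᵥ fun v => |x v|) ≤ x ⬝ᵥ (A *ᵥ x) := by
  simp only [dotProduct, mulVec, Finset.mul_sum]
  refine Finset.sum_le_sum fun a _ => Finset.sum_le_sum fun b _ => ?_
  rcases eq_or_ne a b with rfl | hab
  · apply le_of_eq
    calc |x a| * (A a a * |x a|) = A a a * (|x a| * |x a|) := by ring
      _ = x a * (A a a * x a) := by rw [abs_mul_abs_self]; ring
  · calc |x a| * (A a b * |x b|) = A a b * |x a * x b| := by rw [abs_mul]; ring
      _ ≤ A a b * (x a * x b) := mul_le_mul_of_nonpos_left (le_abs_self _) (hoff a b hab)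
      _ = x a * (A a b * x b) := by ring

lemma eq_zero_of_mulVec_eq_smul_of_eq_zero (hoff : ∀ a b, a ≠ b → A a b ≤ 0) {μ : ℝ}
    {y : n → ℝ} (hy : 0 ≤ y) (hAy : A *ᵥ y = μ • y) {a b : n} (hb : y b = 0) (hba : A b a ≠ 0) :
    y a = 0 := by
  have hterms : ∀ t ∈ Finset.univ, A b t * y t ≤ 0 := by
    intro t _
    rcases eq_or_ne b t with rfl | hbt
    · simp [hb]
    · exact mul_nonpos_of_nonpos_of_nonneg (hoff b t hbt) (hy t)
  have hsum : ∑ t, A b t * y t = 0 := by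
    simpa [hb, mulVec, dotProduct] using congrFun hAy b
  exact (mul_eq_zero.mp ((Finset.sum_eq_zero_iff_of_nonpos hterms).mp hsum a
    (Finset.mem_univ a))).resolve_left hba

namespace IsHermitian

lemma eq_of_mulVec_eq_smul_of_dotProduct_ne_zero (hA : A.IsHermitian) {s t : ℝ} {x y : n → ℝ}
    (hx : A *ᵥ x = s • x) (hy : A *ᵥ y = t • y) (hxy : x ⬝ᵥ y ≠ 0) : s = t := by
  have h : x ⬝ᵥ (A *ᵥ y) = (A *ᵥ x) ⬝ᵥ y := by
    rw [dotProduct_mulVec, ← mulVec_transpose, (isHermitian_iff_isSymm.mp hA).eq, dotProduct_comm]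
  rw [hx, hy, dotProduct_smul, smul_dotProduct, smul_eq_mul, smul_eq_mul] at h
  exact (mul_right_cancel₀ hxy h).symm

variable [DecidableEq n]

lemma posSemidef_sub_smul_one (hA : A.IsHermitian) {μ : ℝ} (hμ : ∀ i, μ ≤ hA.eigenvalues i) :
    (A - μ • (1 : Matrix n n ℝ)).PosSemidef := by
  have h : A - μ • 1 = Unitary.conjStarAlgAut ℝ _ hA.eigenvectorUnitary
      (diagonal fun i => hA.eigenvalues i - μ) := by
    rw [← diagonal_sub, map_sub, ← smul_one_eq_diagonal, map_smul, map_one]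
    conv_lhs => rw [hA.spectral_theorem]
    rfl
  rw [h, Unitary.conjStarAlgAut_apply, Unitary.isUnit_coe.posSemidef_star_right_conjugate_iff]
  simpa [sub_nonneg] using hμ

lemma mul_dotProduct_self_le (hA : A.IsHermitian) {μ : ℝ} (hμ : ∀ i, μ ≤ hA.eigenvalues i)
    (x : n → ℝ) : μ * (x ⬝ᵥ x) ≤ x ⬝ᵥ (A *ᵥ x) := by
  have := (hA.posSemidef_sub_smul_one hμ).dotProduct_mulVec_nonneg x
  rw [star_trivial, dotProduct_sub_smul_one_mulVec] at this
  linarith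

lemma mulVec_eq_smul_of_dotProduct_eq (hA : A.IsHermitian) {μ : ℝ}
    (hμ : ∀ i, μ ≤ hA.eigenvalues i) {x : n → ℝ} (hx : x ⬝ᵥ (A *ᵥ x) = μ * (x ⬝ᵥ x)) :
    A *ᵥ x = μ • x := by
  have h := ((hA.posSemidef_sub_smul_one hμ).dotProduct_mulVec_zero_iff x).mp (by
    rw [star_trivial, dotProduct_sub_smul_one_mulVec, hx, sub_self])
  rwa [sub_mulVec, smul_mulVec, one_mulVec, sub_eq_zero] at h

lemma iInf_eigenvalues_le (hA : A.IsHermitian) (i : n) :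
    ⨅ j, hA.eigenvalues j ≤ hA.eigenvalues i :=
  ciInf_le (Finite.bddBelow_range _) i

lemma exists_mulVec_eq_iInf_eigenvalues_smul [Nonempty n] (hA : A.IsHermitian) :
    ∃ x : n → ℝ, x ≠ 0 ∧ A *ᵥ x = (⨅ j, hA.eigenvalues j) • x := by
  obtain ⟨i, hi⟩ := Finite.exists_min hA.eigenvalues
  refine ⟨hA.eigenvectorBasis i, fun h => ?_, ?_⟩
  · exact hA.eigenvectorBasis.orthonormal.ne_zero i (by ext j; exact congrFun h j)
  · rw [hA.mulVec_eigenvectorBasis, le_antisymm (hA.iInf_eigenvalues_le i) (le_ciInf hi)]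

theorem exists_pos_mulVec_eq_iInf_eigenvalues_smul (hA : A.IsHermitian) {H : SimpleGraph n}
    (hH : H.Connected) (hoff : ∀ a b, a ≠ b → A a b ≤ 0) (hadj : ∀ a b, H.Adj a b → A a b ≠ 0) :
    ∃ φ : n → ℝ, (∀ v, 0 < φ v) ∧ A *ᵥ φ = (⨅ j, hA.eigenvalues j) • φ := by
  have := hH.nonempty
  obtain ⟨x, hx0, hx⟩ := hA.exists_mulVec_eq_iInf_eigenvalues_smul
  set μ := ⨅ j, hA.eigenvalues j
  set y : n → ℝ := fun v => |x v|
  have hyy : y ⬝ᵥ y = x ⬝ᵥ x := by simp [y, dotProduct, abs_mul_abs_self]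
  have hy : A *ᵥ y = μ • y := by
    refine hA.mulVec_eq_smul_of_dotProduct_eq hA.iInf_eigenvalues_le (le_antisymm ?_
      (hA.mul_dotProduct_self_le hA.iInf_eigenvalues_le y))
    calc y ⬝ᵥ (A *ᵥ y) ≤ x ⬝ᵥ (A *ᵥ x) := abs_dotProduct_mulVec_abs_le hoff x
      _ = μ * (y ⬝ᵥ y) := by rw [hx, dotProduct_smul, hyy, smul_eq_mul]
  refine ⟨y, fun v => (abs_nonneg _).lt_of_ne' fun hv => hx0 (funext fun w => ?_), hy⟩
  have hzero := hH.preconnected.forall_of_adj_imp (fun a b hab ha =>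
    eq_zero_of_mulVec_eq_smul_of_eq_zero hoff (fun _ => abs_nonneg _) hy ha (hadj a b hab)) hv w
  exact abs_eq_zero.mp hzero

lemma star_eigenvectorUnitary_mul (hA : A.IsHermitian) :
    star (hA.eigenvectorUnitary : Matrix n n ℝ) * A =
      diagonal hA.eigenvalues * star (hA.eigenvectorUnitary : Matrix n n ℝ) := by
  have h := hA.conjStarAlgAut_star_eigenvectorUnitary
  simp only [Unitary.conjStarAlgAut_apply, Unitary.coe_star, star_star] at h
  calc _ = star (hA.eigenvectorUnitary : Matrix n n ℝ) * A * hA.eigenvectorUnitary *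
        star (hA.eigenvectorUnitary : Matrix n n ℝ) := by simp [mul_assoc]
    _ = _ := by rw [h]; rfl

theorem exists_eq_smul_of_injective_eigenvalues (hA : A.IsHermitian)
    (hinj : Function.Injective hA.eigenvalues) {t : ℝ} {x y : n → ℝ} (hx : A *ᵥ x = t • x)
    (hy : A *ᵥ y = t • y) (hx0 : x ≠ 0) : ∃ c : ℝ, y = c • x := by
  have hAU := hA.star_eigenvectorUnitary_mul
  set U : Matrix n n ℝ := (hA.eigenvectorUnitary : Matrix n n ℝ)
  have hUU : ∀ z, U *ᵥ (star U *ᵥ z) = z := by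
    simp [U, mulVec_mulVec]
  -- in the eigen-coordinates `star U *ᵥ z` a `t`-eigenvector lives on the indices with `λ i = t`
  have hcoord : ∀ z, A *ᵥ z = t • z → ∀ i, hA.eigenvalues i ≠ t → (star U *ᵥ z) i = 0 := by
    intro z hz i hi
    have h := congrFun (congrArg (star U *ᵥ ·) hz) i
    rw [mulVec_mulVec, hAU, ← mulVec_mulVec, mulVec_diagonal, mulVec_smul, Pi.smul_apply,
      smul_eq_mul] at h
    exact (mul_eq_zero.mp (by linarith : (hA.eigenvalues i - t) * (star U *ᵥ z) i = 0))
      |>.resolve_left (sub_ne_zero.mpr hi)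
  obtain ⟨i₀, hi₀⟩ : ∃ i₀, (star U *ᵥ x) i₀ ≠ 0 := by
    by_contra! h
    rw [← hUU x, show star U *ᵥ x = 0 from funext h, mulVec_zero] at hx0
    exact hx0 rfl
  have ht : hA.eigenvalues i₀ = t := not_not.mp fun h => hi₀ (hcoord x hx i₀ h)
  have hsupp : ∀ z, A *ᵥ z = t • z → ∀ i ≠ i₀, (star U *ᵥ z) i = 0 := fun z hz i hi =>
    hcoord z hz i fun h => hi (hinj (h.trans ht.symm))
  suffices ∃ c : ℝ, star U *ᵥ y = c • (star U *ᵥ x) by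
    obtain ⟨c, hc⟩ := this
    exact ⟨c, by rw [← hUU y, hc, mulVec_smul, hUU x]⟩
  refine ⟨(star U *ᵥ y) i₀ / (star U *ᵥ x) i₀, funext fun i => ?_⟩
  rcases eq_or_ne i i₀ with rfl | hi
  · simp [hi₀]
  · simp [hsupp y hy i hi, hsupp x hx i hi]

end IsHermitian

section BlockDiagonal

variable {ι κ : Type*} [Fintype ι] {M : Matrix ι ι ℝ} {K : ι → κ}

lemma mulVec_apply_eq_submatrix_mulVec (hM : ∀ a b, K a ≠ K b → M a b = 0) (x : ι → ℝ) (v : ι)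
    [Fintype {b // K b = K v}] :
    (M *ᵥ x) v =
      (M.submatrix Subtype.val Subtype.val *ᵥ fun b : {b // K b = K v} => x b) ⟨v, rfl⟩ := by
  classical
  simp only [mulVec, dotProduct, submatrix_apply]
  rw [← Finset.sum_subtype (Finset.univ.filter fun b => K b = K v) (by simp)
    (fun b => M v b * x b), Finset.sum_filter_of_ne]
  intro b _ hb
  by_contra h
  exact hb (by rw [hM v b (Ne.symm h), zero_mul])

lemma mulVec_eq_smul_of_forall_submatrix (hM : ∀ a b, K a ≠ K b → M a b = 0)
    [∀ c, Fintype {b // K b = c}] {L : ℝ} {x : ι → ℝ}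
    (hx : ∀ c, M.submatrix Subtype.val Subtype.val *ᵥ (fun b : {b // K b = c} => x b) =
      L • fun b : {b // K b = c} => x b) :
    M *ᵥ x = L • x :=
  funext fun v => (mulVec_apply_eq_submatrix_mulVec hM x v).trans (congrFun (hx (K v)) ⟨v, rfl⟩)

lemma mulVec_mul_comp (hM : ∀ a b, K a ≠ K b → M a b = 0) (d : κ → ℝ) (x : ι → ℝ) :
    M *ᵥ (fun v => d (K v) * x v) = fun v => d (K v) * (M *ᵥ x) v := by
  funext v
  simp only [mulVec, dotProduct, Finset.mul_sum]
  refine Finset.sum_congr rfl fun b _ => ?_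
  by_cases h : K v = K b
  · rw [h]; ring
  · rw [hM v b h]; ring

end BlockDiagonal

end Matrix

open Classical in
/-- `M = -A(P) + Q` for some diagonal potential `Q`. -/
def IsSchrodingerOperator {ι : Type*} (P : SimpleGraph ι) (M : Matrix ι ι ℝ) : Prop :=
  ∀ a b, a ≠ b → M a b = if P.Adj a b then -1 else 0

namespace IsSchrodingerOperator

variable {V : ℕ} {P : SimpleGraph (Fin V)} {M : Matrix (Fin V) (Fin V) ℝ}

lemma apply_eq_zero_of_connectedComponentMk_ne (hMP : IsSchrodingerOperator P M) {a b : Fin V}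
    (h : P.connectedComponentMk a ≠ P.connectedComponentMk b) : M a b = 0 := by
  rw [hMP a b fun hab => h (hab ▸ rfl),
    if_neg fun hadj => h (SimpleGraph.ConnectedComponent.sound hadj.reachable)]

theorem exists_pos_submatrix_mulVec_eq_lam1Block (hMP : IsSchrodingerOperator P M)
    (hM : M.IsHermitian) (c : P.ConnectedComponent) :
    letI := Fintype.ofFinite {v // P.connectedComponentMk v = c}
    ∃ u : {v // P.connectedComponentMk v = c} → ℝ,
      (∀ w, 0 < u w) ∧ M.submatrix Subtype.val Subtype.val *ᵥ u = lam1Block hM P c • u := by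
  let := Fintype.ofFinite {v // P.connectedComponentMk v = c}
  let : DecidableEq {v // P.connectedComponentMk v = c} := Classical.decEq _
  refine (hM.submatrix Subtype.val).exists_pos_mulVec_eq_iInf_eigenvalues_smul
    c.connected_toSimpleGraph (fun a b hab => ?_) (fun a b hab => ?_)
  · rw [submatrix_apply, hMP _ _ (Subtype.val_injective.ne hab)]
    split_ifs <;> norm_num
  · have hab : P.Adj a b := hab
    rw [submatrix_apply, hMP _ _ hab.ne, if_pos hab]
    norm_num

theorem exists_pos_mulVec_eq_smul_of_lam1Block_eq (hMP : IsSchrodingerOperator P M)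
    (hM : M.IsHermitian) {L : ℝ} (hL : ∀ c, lam1Block hM P c = L) :
    ∃ φ : Fin V → ℝ, (∀ v, 0 < φ v) ∧ M *ᵥ φ = L • φ := by
  let := fun c => Fintype.ofFinite {v // P.connectedComponentMk v = c}
  choose u hupos hu using hMP.exists_pos_submatrix_mulVec_eq_lam1Block hM
  refine ⟨fun v => u _ ⟨v, rfl⟩, fun v => hupos _ _,
    mulVec_eq_smul_of_forall_submatrix (fun a b => hMP.apply_eq_zero_of_connectedComponentMk_ne)
      fun c => ?_⟩
  have hglue : (fun b : {b // P.connectedComponentMk b = c} => u _ ⟨b.1, rfl⟩) = u c := by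
    funext ⟨b, hb⟩
    subst hb
    rfl
  rw [hglue, hu, hL]

end IsSchrodingerOperator

section Hamiltonian

variable {V : ℕ}

lemma Bmat_apply_of_ne (i j : Fin V) (α : ℝ) {a b : Fin V} (hab : a ≠ b) :
    Bmat i j α a b = if s(a, b) = s(i, j) then 1 else 0 := by
  have h : ¬(a = i ∧ b = i) ∧ ¬(a = j ∧ b = j) := by
    constructor <;> rintro ⟨rfl, rfl⟩ <;> exact hab rfl
  simp [Bmat, h.1, h.2]

lemma Bmat_mulVec_eq_zero {i j : Fin V} (hij : i ≠ j) {α : ℝ} (hα : α ≠ 0) {ψ : Fin V → ℝ}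
    (hψ : ψ j = α * ψ i) : Bmat i j α *ᵥ ψ = 0 := by
  funext a
  rcases eq_or_ne a i with rfl | hai
  · simp [mulVec, dotProduct, Bmat, hij, add_mul, Finset.sum_add_distrib, hψ]
  rcases eq_or_ne a j with rfl | haj
  · simp [mulVec, dotProduct, Bmat, hij.symm, add_mul, Finset.sum_add_distrib, hψ]
    field_simp
    ring
  · simp [mulVec, dotProduct, Bmat, hai, haj]

lemma injOn_sym2Mk_of_lt {S : Finset (Fin V × Fin V)} (hSlt : ∀ p ∈ S, p.1 < p.2) :
    Set.InjOn (fun p : Fin V × Fin V => s(p.1, p.2)) S := by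
  rintro ⟨i, j⟩ hp ⟨i', j'⟩ hp' h
  have hij := hSlt _ hp
  have hij' := hSlt _ hp'
  rcases Sym2.eq_iff.mp h with ⟨rfl, rfl⟩ | ⟨rfl, rfl⟩
  · rfl
  · exact absurd hij (lt_asymm hij')

theorem isSchrodingerOperator_Ham_add_sum_Bmat (G : SimpleGraph (Fin V)) (q : Fin V → ℝ)
    {S : Finset (Fin V × Fin V)} (hSadj : ∀ p ∈ S, G.Adj p.1 p.2) (hSlt : ∀ p ∈ S, p.1 < p.2)
    (γ : Fin V × Fin V → ℝ) :
    IsSchrodingerOperator (G.deleteEdges ↑(S.image fun p => s(p.1, p.2)))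
      (Ham G q + ∑ p ∈ S, Bmat p.1 p.2 (γ p)) := by
  classical
  intro a b hab
  have hsum : ∑ p ∈ S, Bmat p.1 p.2 (γ p) a b =
      if s(a, b) ∈ S.image (fun p => s(p.1, p.2)) then 1 else 0 := by
    simp_rw [Bmat_apply_of_ne _ _ _ hab]
    rw [← Finset.sum_image (f := fun e => if s(a, b) = e then (1 : ℝ) else 0)
      (injOn_sym2Mk_of_lt hSlt), Finset.sum_ite_eq]
  have hadj : s(a, b) ∈ S.image (fun p => s(p.1, p.2)) → G.Adj a b := by
    simp only [Finset.mem_image]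
    rintro ⟨p, hp, hpab⟩
    rw [← G.mem_edgeSet, ← hpab, G.mem_edgeSet]
    exact hSadj p hp
  rw [Matrix.add_apply, Matrix.sum_apply, hsum]
  simp only [SimpleGraph.deleteEdges_adj, Finset.mem_coe]
  by_cases h : s(a, b) ∈ S.image (fun p => s(p.1, p.2))
  · simp only [Ham, of_apply, hab, h, hadj h, not_true, and_false]
    norm_num
  · simp [Ham, hab, h]

end Hamiltonian

section Partition

variable {V : Type*} [DecidableEq V] {G : SimpleGraph V} {S : Finset (V × V)}

theorem ne_zero_of_forall_mul_eq (hG : G.Preconnected) {P : SimpleGraph V}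
    (hP : P = G.deleteEdges ↑(S.image fun e => s(e.1, e.2))) {φ : V → ℝ} (hφ : ∀ v, φ v ≠ 0)
    {γ : V × V → ℝ} (hγ : ∀ e ∈ S, γ e ≠ 0) {d : P.ConnectedComponent → ℝ} (hd0 : d ≠ 0)
    (hd : ∀ e ∈ S, φ e.2 * d (P.connectedComponentMk e.2) =
      γ e * φ e.1 * d (P.connectedComponentMk e.1)) (c : P.ConnectedComponent) : d c ≠ 0 := by
  obtain ⟨c₀, hc₀⟩ := Function.ne_iff.mp hd0
  obtain ⟨v₀, rfl⟩ := c₀.exists_rep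
  obtain ⟨v, rfl⟩ := c.exists_rep
  refine hG.forall_of_deleteEdges_adj_imp (S := S) (p := fun v => d (P.connectedComponentMk v) ≠ 0)
    (fun a b hab => ?_) (fun e he => ?_) hc₀ v
  · rw [SimpleGraph.ConnectedComponent.sound (hP ▸ hab).reachable]
    exact id
  · have h := congrArg (· ≠ 0) (hd e he)
    simpa [hφ e.1, hφ e.2, hγ e he, eq_comm] using h.symm

theorem dotProduct_ne_zero_of_sign_pattern [Fintype V] (hG : G.Connected)
    {ψ ψ' : V → ℝ} (hψ : ∀ v, ψ v ≠ 0) (hψ' : ∀ v, ψ' v ≠ 0)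
    (hψP : ∀ a b, (G.deleteEdges ↑(S.image fun e => s(e.1, e.2))).Adj a b → 0 < ψ a * ψ b)
    (hψP' : ∀ a b, (G.deleteEdges ↑(S.image fun e => s(e.1, e.2))).Adj a b → 0 < ψ' a * ψ' b)
    {γ γ' : V × V → ℝ} (hγγ' : ∀ e ∈ S, 0 < γ e * γ' e)
    (hψS : ∀ e ∈ S, ψ e.2 = γ e * ψ e.1) (hψS' : ∀ e ∈ S, ψ' e.2 = γ' e * ψ' e.1) :
    ψ ⬝ᵥ ψ' ≠ 0 := by
  obtain ⟨v₀⟩ := hG.nonempty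
  set c := ψ v₀ * ψ' v₀
  have hsign : ∀ v, 0 < c * (ψ v * ψ' v) := by
    refine hG.preconnected.forall_of_deleteEdges_adj_imp (S := S) (fun a b hab ha => ?_)
      (fun e he => ?_) (mul_self_pos.mpr (mul_ne_zero (hψ v₀) (hψ' v₀)))
    · have h := mul_pos (mul_pos ha (hψP a b hab)) (hψP' a b hab)
      have hsq : 0 < (ψ a * ψ' a) ^ 2 := by
        have := mul_ne_zero (hψ a) (hψ' a)
        positivity
      refine (mul_pos_iff_of_pos_right hsq).mp ?_
      linear_combination h
    · rw [hψS e he, hψS' e he,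
        show c * (γ e * ψ e.1 * (γ' e * ψ' e.1)) = (γ e * γ' e) * (c * (ψ e.1 * ψ' e.1)) by ring,
        mul_pos_iff_of_pos_left (hγγ' e he)]
  intro h
  have := Finset.sum_pos (fun v _ => hsign v) ⟨v₀, Finset.mem_univ _⟩
  rw [← Finset.mul_sum] at this
  exact this.ne' (by rw [← dotProduct, h, mul_zero])

end Partition

theorem exists_Ham_eigenvector_of_equipartition {V : ℕ} {G : SimpleGraph (Fin V)}
    (hG : G.Connected) (q : Fin V → ℝ) {S : Finset (Fin V × Fin V)}
    (hSadj : ∀ p ∈ S, G.Adj p.1 p.2) (hSlt : ∀ p ∈ S, p.1 < p.2) {P : SimpleGraph (Fin V)}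
    (hP : P = G.deleteEdges ↑(S.image fun p => s(p.1, p.2)))
    (hS : S.card < Nat.card P.ConnectedComponent) {γ : Fin V × Fin V → ℝ}
    (hγ : ∀ p ∈ S, γ p ≠ 0) {HP : Matrix (Fin V) (Fin V) ℝ}
    (hHPdef : HP = Ham G q + ∑ p ∈ S, Bmat p.1 p.2 (γ p)) (hHP : HP.IsHermitian) {Λ : ℝ}
    (hΛ : ∀ c, lam1Block hHP P c = Λ) :
    ∃ ψ : Fin V → ℝ, (∀ v, ψ v ≠ 0) ∧ (∀ a b, P.Adj a b → 0 < ψ a * ψ b) ∧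
      Ham G q *ᵥ ψ = Λ • ψ ∧ ∀ p ∈ S, ψ p.2 = γ p * ψ p.1 := by
  set K := P.connectedComponentMk
  have hMP : IsSchrodingerOperator P HP := by
    subst hP hHPdef
    exact isSchrodingerOperator_Ham_add_sum_Bmat G q hSadj hSlt γ
  obtain ⟨φ, hφ, hHPφ⟩ := hMP.exists_pos_mulVec_eq_smul_of_lam1Block_eq hHP hΛ
  -- one scalar per block, subject to one linear condition per removed edge
  obtain ⟨d, hd0, hd⟩ := exists_ne_zero_forall_mul_eq S hS (fun p => K p.2) (fun p => K p.1)
    (fun p => φ p.2) (fun p => γ p * φ p.1)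
  have hdK := ne_zero_of_forall_mul_eq hG.preconnected hP (fun v => (hφ v).ne') hγ hd0 hd
  set ψ : Fin V → ℝ := fun v => d (K v) * φ v
  have hψS : ∀ p ∈ S, ψ p.2 = γ p * ψ p.1 := fun p hp => by
    simp only [ψ]
    linear_combination hd p hp
  have hHPψ : HP *ᵥ ψ = Λ • ψ := by
    rw [mulVec_mul_comp (fun a b => hMP.apply_eq_zero_of_connectedComponentMk_ne), hHPφ]
    funext v
    simp only [ψ, Pi.smul_apply, smul_eq_mul]
    ring
  have hHamψ : Ham G q *ᵥ ψ = Λ • ψ := by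
    rwa [hHPdef, add_mulVec, sum_mulVec, Finset.sum_eq_zero fun p hp =>
      Bmat_mulVec_eq_zero (hSlt p hp).ne (hγ p hp) (hψS p hp), add_zero] at hHPψ
  refine ⟨ψ, fun v => mul_ne_zero (hdK _) (hφ v).ne', fun a b hab => ?_, hHamψ, hψS⟩
  rw [show ψ a * ψ b = d (K a) ^ 2 * (φ a * φ b) by
    simp only [ψ, K, SimpleGraph.ConnectedComponent.sound hab.reachable]; ring]
  have := hdK (K a)
  have := hφ a
  have := hφ b
  positivity

theorem stmt_16_general {V : ℕ} (G : SimpleGraph (Fin V)) (hG : G.Connected) (q : Fin V → ℝ)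
    (S : Finset (Fin V × Fin V))
    (hSadj : ∀ p ∈ S, G.Adj p.1 p.2) (hSlt : ∀ p ∈ S, p.1 < p.2)
    (P : SimpleGraph (Fin V)) (hPdef : P = G.deleteEdges ↑(S.image fun p => s(p.1, p.2)))
    (htree : S.card + 1 = Nat.card P.ConnectedComponent)
    (hGsimple : Function.Injective (sortedEigs (Ham_isHermitian G q)))
    (γ γ' : Fin V × Fin V → ℝ) (hγ : ∀ p ∈ S, γ p < 0) (hγ' : ∀ p ∈ S, γ' p < 0)
    (HP HP' : Matrix (Fin V) (Fin V) ℝ)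
    (hHPdef : HP = Ham G q + ∑ p ∈ S, Bmat p.1 p.2 (γ p)) (hHP : HP.IsHermitian)
    (hHPdef' : HP' = Ham G q + ∑ p ∈ S, Bmat p.1 p.2 (γ' p)) (hHP' : HP'.IsHermitian)
    (hEq : ∃ lam : ℝ, ∀ c : P.ConnectedComponent, lam1Block hHP P c = lam)
    (hEq' : ∃ lam : ℝ, ∀ c : P.ConnectedComponent, lam1Block hHP' P c = lam) :
    ∀ p ∈ S, γ p = γ' p := by
  subst hPdef
  obtain ⟨Λ, hΛ⟩ := hEq
  obtain ⟨Λ', hΛ'⟩ := hEq'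
  obtain ⟨ψ, hψ0, hψP, hψ, hψS⟩ := exists_Ham_eigenvector_of_equipartition hG q hSadj hSlt rfl
    (by omega) (fun p hp => (hγ p hp).ne) hHPdef hHP hΛ
  obtain ⟨ψ', hψ0', hψP', hψ', hψS'⟩ := exists_Ham_eigenvector_of_equipartition hG q hSadj hSlt
    rfl (by omega) (fun p hp => (hγ' p hp).ne) hHPdef' hHP' hΛ'
  have hdot : ψ ⬝ᵥ ψ' ≠ 0 := dotProduct_ne_zero_of_sign_pattern hG hψ0 hψ0' hψP hψP'
    (fun p hp => mul_pos_of_neg_of_neg (hγ p hp) (hγ' p hp)) hψS hψS'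
  obtain rfl := (Ham_isHermitian G q).eq_of_mulVec_eq_smul_of_dotProduct_ne_zero hψ hψ' hdot
  obtain ⟨v₀⟩ := hG.nonempty
  obtain ⟨t, rfl⟩ := (Ham_isHermitian G q).exists_eq_smul_of_injective_eigenvalues
    ((Equiv.injective_comp _ _).mp hGsimple) hψ hψ' fun h => hψ0 v₀ (congrFun h v₀)
  simp only [Pi.smul_apply, smul_eq_mul] at hψ0' hψS'
  intro p hp
  have ht : t ≠ 0 := left_ne_zero_of_mul (hψ0' v₀)
  have h : (γ p - γ' p) * (t * ψ p.1) = 0 := by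
    linear_combination hψS' p hp - t * hψS p hp
  exact sub_eq_zero.mp ((mul_eq_zero.mp h).resolve_right (mul_ne_zero ht (hψ0 p.1)))

/-- Let `P` be a bipartite `ν`-partition of `G` whose number of removed
edges is `ν - 1` (a tree partition), and assume all eigenvalues of `H(G)` are simple. Then
there is at most one vector `γ` of strictly negative parameters on the removed edges for
which `(P,γ)` is an equipartition. -/
theorem stmt_16 {V : ℕ} (G : SimpleGraph (Fin V)) (hG : G.Connected) (q : Fin V → ℝ)
    (S : Finset (Fin V × Fin V))
    (hSadj : ∀ p ∈ S, G.Adj p.1 p.2) (hSlt : ∀ p ∈ S, p.1 < p.2)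
    (P : SimpleGraph (Fin V)) (hPdef : P = G.deleteEdges ↑(S.image fun p => s(p.1, p.2)))
    (hpart : ∀ p ∈ S, ¬ P.Reachable p.1 p.2)
    (hbip : ∃ σ : P.ConnectedComponent → Bool,
      ∀ p ∈ S, σ (P.connectedComponentMk p.1) ≠ σ (P.connectedComponentMk p.2))
    (htree : S.card + 1 = Nat.card P.ConnectedComponent)
    (hGsimple : Function.Injective (sortedEigs (Ham_isHermitian G q)))
    (γ γ' : Fin V × Fin V → ℝ) (hγ : ∀ p ∈ S, γ p < 0) (hγ' : ∀ p ∈ S, γ' p < 0)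
    (HP HP' : Matrix (Fin V) (Fin V) ℝ)
    (hHPdef : HP = Ham G q + ∑ p ∈ S, Bmat p.1 p.2 (γ p)) (hHP : HP.IsHermitian)
    (hHPdef' : HP' = Ham G q + ∑ p ∈ S, Bmat p.1 p.2 (γ' p)) (hHP' : HP'.IsHermitian)
    (hEq : ∃ lam : ℝ, ∀ c : P.ConnectedComponent, lam1Block hHP P c = lam)
    (hEq' : ∃ lam : ℝ, ∀ c : P.ConnectedComponent, lam1Block hHP' P c = lam) :
    ∀ p ∈ S, γ p = γ' p :=
  stmt_16_general G hG q S hSadj hSlt P hPdef htree hGsimple γ γ' hγ hγ' HP HP' hHPdef hHP hHPdef'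
    hHP' hEq hEq'
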